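/- Let P₀ and P₁ be laws of a Poisson point process on [0,1] × ℝ where under P_g, points lie below the graph of g with intensity n·f_D(x)·1_{\{y ≤ g(x)\}} (restricted to a bounded band containing both graphs), with g = 0 under P₀ and g = f_n(x) = C(π(n-1))^{-1}sin(π(n-1)x) under P₁. Then the test T = 1{X([0,1] × (0,∞)) > 0} satisfies P₀(T = 1) = 0 and P₁(T = 1) ≥ 1 - exp(-n∫₀¹ (f_n)_+(x) dx) = 1 - exp(-Cπ^{-2} n/(n-1)), which is bounded away from 0 uniformly in n. -/

import Mathlib

open Set MeasureTheory Real

/-- The law of a Poisson point process with finite intensity measure `ν`, represented on the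
space of finite ordered point configurations `(n : ℕ) × (Fin n → E)`. -/
noncomputable def pppLaw {E : Type*} [MeasurableSpace E] (ν : Measure E) [SigmaFinite ν] :
    Measure ((n : ℕ) × (Fin n → E)) :=
  Measure.sum (fun n => (ENNReal.ofReal (Real.exp (-(ν Set.univ).toReal)) / n.factorial) •
    Measure.map (Sigma.mk n) (Measure.pi (fun _ : Fin n => ν)))

/-- Intensity measure of the PPP with boundary function `g` and uniform design on `[0,1]`,
restricted to the bounded band `[0,1] × [-(C+1), C+1]`:
`λ_g(x,y) = n · 1_{x ∈ [0,1], -(C+1) ≤ y ≤ g(x)}`. -/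
noncomputable def bandIntensity (C : ℝ) (n : ℕ) (g : ℝ → ℝ) : Measure (ℝ × ℝ) :=
  (volume : Measure (ℝ × ℝ)).withDensity fun z =>
    Set.indicator {z : ℝ × ℝ | z.1 ∈ Icc (0:ℝ) 1 ∧ z.2 ∈ Icc (-(C + 1)) (g z.1)}
      (fun _ => (n : ENNReal)) z

/-! The test rejects exactly when some point lies in the open upper half-plane `S = {y > 0}`.
For a Poisson process with finite intensity `ν`, summing over the number of points gives
`P(all points in t) = exp (ν t - ν univ)`, hence `P(some point in S) = 1 - exp (-ν S)`.
Under `P₀` the band lies below `y = 0`, so `ν S = 0`. Under `P₁`, `ν S = n ∫₀¹ (f_n)₊`; since `sin⁺`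
integrates to `2` over each period, `∫₀^{πm} sin⁺ ≥ m`, which gives `ν S ≥ C n / (π² (n - 1))`. -/

lemma measurable_sigma_mk {α : Type*} {β : α → Type*} [∀ a, MeasurableSpace (β a)] (a : α) :
    Measurable (Sigma.mk a : β a → Sigma β) := fun _ hs =>
  MeasurableSpace.measurableSet_iInf.1 hs a

lemma measurableSet_sigma_iff {α : Type*} {β : α → Type*} [∀ a, MeasurableSpace (β a)]
    {s : Set (Sigma β)} : MeasurableSet s ↔ ∀ a, MeasurableSet (Sigma.mk a ⁻¹' s) :=
  MeasurableSpace.measurableSet_iInf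

section PoissonProcess

variable {E : Type*}

lemma preimage_sigma_mk_forall_mem (t : Set E) (k : ℕ) :
    Sigma.mk k ⁻¹' {ω : (k : ℕ) × (Fin k → E) | ∀ i, ω.2 i ∈ t} = univ.pi fun _ => t := by
  ext; simp

variable [MeasurableSpace E] (ν : Measure E) [SigmaFinite ν]

lemma measurableSet_forall_mem {t : Set E} (ht : MeasurableSet t) :
    MeasurableSet {ω : (k : ℕ) × (Fin k → E) | ∀ i, ω.2 i ∈ t} :=
  measurableSet_sigma_iff.2 fun k =>
    preimage_sigma_mk_forall_mem t k ▸ MeasurableSet.univ_pi fun _ => ht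

lemma pppLaw_forall_mem (hν : ν univ ≠ ⊤) {t : Set E} (ht : MeasurableSet t) :
    pppLaw ν {ω | ∀ i, ω.2 i ∈ t} = ENNReal.ofReal (exp ((ν t).toReal - (ν univ).toReal)) := by
  have hνt : ∀ k : ℕ, ν t ^ k = ENNReal.ofReal ((ν t).toReal ^ k) := fun k => by
    rw [ENNReal.ofReal_pow ENNReal.toReal_nonneg,
      ENNReal.ofReal_toReal (measure_ne_top_of_subset (subset_univ t) hν)]
  have hsum : HasSum (fun k : ℕ => exp (-(ν univ).toReal) * (ν t).toReal ^ k / k.factorial)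
      (exp (-(ν univ).toReal) * exp (ν t).toReal) := by
    simp_rw [mul_div_assoc]
    refine HasSum.mul_left _ ?_
    rw [exp_eq_exp_ℝ, NormedSpace.exp_eq_tsum_div]
    exact (summable_pow_div_factorial _).hasSum
  rw [pppLaw, Measure.sum_apply _ (measurableSet_forall_mem ht), sub_eq_neg_add, exp_add,
    ← hsum.tsum_eq, ENNReal.ofReal_tsum_of_nonneg (fun k => by positivity) hsum.summable]
  refine tsum_congr fun k => ?_
  rw [Measure.smul_apply, Measure.map_apply (measurable_sigma_mk k) (measurableSet_forall_mem ht),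
    preimage_sigma_mk_forall_mem, Measure.pi_pi, Finset.prod_const, Finset.card_univ,
    Fintype.card_fin, hνt, smul_eq_mul, ENNReal.ofReal_div_of_pos (by positivity),
    ENNReal.ofReal_mul (exp_nonneg _), ENNReal.ofReal_natCast, div_eq_mul_inv, div_eq_mul_inv,
    mul_right_comm]

lemma pppLaw_exists_mem (hν : ν univ ≠ ⊤) {s : Set E} (hs : MeasurableSet s) :
    pppLaw ν {ω | ∃ i, ω.2 i ∈ s} = 1 - ENNReal.ofReal (exp (-(ν s).toReal)) := by
  have hcompl : {ω : (k : ℕ) × (Fin k → E) | ∃ i, ω.2 i ∈ s}ᶜ = {ω | ∀ i, ω.2 i ∈ sᶜ} := by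
    ext; simp
  have hmass : (ν sᶜ).toReal - (ν univ).toReal = -(ν s).toReal := by
    rw [← measure_add_measure_compl hs, ENNReal.toReal_add, add_comm]
    · ring
    all_goals exact measure_ne_top_of_subset (subset_univ _) hν
  have hprob : pppLaw ν univ = 1 := by
    simpa using pppLaw_forall_mem ν hν MeasurableSet.univ
  have hvoid := pppLaw_forall_mem ν hν hs.compl
  rw [← compl_compl {ω : (k : ℕ) × (Fin k → E) | ∃ i, ω.2 i ∈ s}, hcompl,
    measure_compl (measurableSet_forall_mem hs.compl) (hvoid ▸ ENNReal.ofReal_ne_top), hprob,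
    hvoid, hmass]

end PoissonProcess

section BandIntensity

variable {C : ℝ} {n : ℕ} {g : ℝ → ℝ}

lemma bandIntensity_eq_smul_restrict (hg : Measurable g) :
    bandIntensity C n g = (n : ENNReal) •
      volume.restrict {z : ℝ × ℝ | z.1 ∈ Icc (0:ℝ) 1 ∧ z.2 ∈ Icc (-(C + 1)) (g z.1)} := by
  rw [bandIntensity, withDensity_indicator
    (measurableSet_region_between_cc measurable_const hg measurableSet_Icc), withDensity_const]

lemma bandIntensity_univ_ne_top {M : ℝ} (hg : Measurable g) (hM : ∀ x ∈ Icc (0:ℝ) 1, g x ≤ M) :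
    bandIntensity C n g univ ≠ ⊤ := by
  rw [bandIntensity_eq_smul_restrict hg, Measure.smul_apply, Measure.restrict_apply_univ]
  have hrect : volume (Icc (0:ℝ) 1 ×ˢ Icc (-(C + 1)) M) ≠ ⊤ := by
    rw [Measure.volume_eq_prod, Measure.prod_prod, Real.volume_Icc, Real.volume_Icc]
    finiteness
  refine ENNReal.mul_ne_top (by finiteness) (measure_ne_top_of_subset ?_ hrect)
  rintro z ⟨hx, hy⟩
  exact ⟨hx, hy.1, hy.2.trans (hM _ hx)⟩

lemma bandIntensity_upperHalfPlane_eq_zero (hg : Measurable g) (hg₀ : ∀ x ∈ Icc (0:ℝ) 1, g x ≤ 0) :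
    bandIntensity C n g {z | 0 < z.2} = 0 := by
  rw [bandIntensity_eq_smul_restrict hg, Measure.smul_apply,
    Measure.restrict_apply (measurableSet_lt measurable_const measurable_snd)]
  refine smul_eq_zero_of_right _ (measure_mono_null (fun z ⟨hpos, hx, hy⟩ => ?_) measure_empty)
  exact (hpos.trans_le (hy.2.trans (hg₀ _ hx))).false

lemma lintegral_le_bandIntensity_upperHalfPlane (hC : -1 ≤ C) (hg : Measurable g) :
    n * ∫⁻ x in Icc (0:ℝ) 1, ENNReal.ofReal (g x) ≤ bandIntensity C n g {z | 0 < z.2} := by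
  rw [bandIntensity_eq_smul_restrict hg, Measure.smul_apply,
    Measure.restrict_apply (measurableSet_lt measurable_const measurable_snd), smul_eq_mul]
  gcongr
  calc ∫⁻ x in Icc (0:ℝ) 1, ENNReal.ofReal (g x)
      = volume (regionBetween 0 g (Icc 0 1)) := by
        rw [Measure.volume_eq_prod, volume_regionBetween_eq_lintegral' measurable_zero hg
          measurableSet_Icc]
        simp
    _ ≤ _ := by
        refine measure_mono fun z ⟨hx, hpos, hle⟩ => ?_
        rw [Pi.zero_apply] at hpos
        exact ⟨hpos, hx, by linarith, hle.le⟩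

end BandIntensity

lemma integral_sin_posPart_zero_pi : ∫ u in (0)..π, max (sin u) 0 = 2 := by
  rw [intervalIntegral.integral_congr (g := sin) fun u hu => max_eq_left ?_, integral_sin]
  · norm_num
  rw [uIcc_of_le pi_pos.le] at hu
  exact sin_nonneg_of_nonneg_of_le_pi hu.1 hu.2

lemma integral_sin_posPart_pi_two_pi : ∫ u in π..2 * π, max (sin u) 0 = 0 := by
  have hle : π ≤ 2 * π := by linarith [pi_pos]
  rw [intervalIntegral.integral_congr (g := fun _ => 0) fun u hu => max_eq_right ?_]
  · simp
  rw [uIcc_of_le hle] at hu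
  have := sin_nonneg_of_nonneg_of_le_pi (x := u - π) (by linarith [hu.1]) (by linarith [hu.2])
  rw [sin_sub_pi] at this
  linarith

lemma intervalIntegrable_sin_posPart (a b : ℝ) :
    IntervalIntegrable (fun u => max (sin u) 0) volume a b :=
  (continuous_sin.max continuous_const).intervalIntegrable a b

lemma integral_sin_posPart_period (t : ℝ) : ∫ u in t..t + 2 * π, max (sin u) 0 = 2 := by
  have hper : Function.Periodic (fun u => max (sin u) 0) (2 * π) := fun u => by
    simp only [sin_add_two_pi]
  rw [hper.intervalIntegral_add_eq t 0, zero_add,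
    ← intervalIntegral.integral_add_adjacent_intervals (b := π) (intervalIntegrable_sin_posPart _ _)
      (intervalIntegrable_sin_posPart _ _), integral_sin_posPart_zero_pi,
    integral_sin_posPart_pi_two_pi, add_zero]

lemma natCast_le_integral_sin_posPart (m : ℕ) : (m : ℝ) ≤ ∫ u in (0)..π * m, max (sin u) 0 := by
  induction m using Nat.twoStepInduction with
  | zero => simp
  | one => simp [integral_sin_posPart_zero_pi]
  | more k ih _ =>
    rw [← intervalIntegral.integral_add_adjacent_intervals (b := π * k)
      (intervalIntegrable_sin_posPart _ _) (intervalIntegrable_sin_posPart _ _),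
      show π * ↑(k + 2) = π * k + 2 * π by push_cast; ring, integral_sin_posPart_period]
    push_cast
    linarith

lemma inv_pi_le_integral_sin_posPart_mul {m : ℕ} (hm : m ≠ 0) :
    π⁻¹ ≤ ∫ x in (0)..1, max (sin (π * m * x)) 0 := by
  have hc : 0 < π * m := by positivity
  rw [intervalIntegral.integral_comp_mul_left (fun u => max (sin u) 0) hc.ne', mul_zero, mul_one,
    smul_eq_mul]
  calc π⁻¹ = (π * m)⁻¹ * m := by field_simp
    _ ≤ _ := by gcongr; exact natCast_le_integral_sin_posPart m

lemma ofReal_div_pi_le_lintegral_sin_posPart {a : ℝ} (ha : 0 ≤ a) {m : ℕ} (hm : m ≠ 0) :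
    ENNReal.ofReal (a / π) ≤ ∫⁻ x in Icc (0:ℝ) 1, ENNReal.ofReal (a * sin (π * m * x)) := by
  have hcont : Continuous fun x => max (a * sin (π * m * x)) 0 := by fun_prop
  calc ENNReal.ofReal (a / π)
      ≤ ENNReal.ofReal (∫ x in Icc (0:ℝ) 1, max (a * sin (π * m * x)) 0) := by
        gcongr
        have hmax : ∀ u, max (a * u) 0 = a * max u 0 := fun u => by
          rw [mul_max_of_nonneg _ _ ha, mul_zero]
        rw [integral_Icc_eq_integral_Ioc, ← intervalIntegral.integral_of_le zero_le_one]
        simp_rw [hmax, intervalIntegral.integral_const_mul, div_eq_mul_inv]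
        gcongr
        exact inv_pi_le_integral_sin_posPart_mul hm
    _ = ∫⁻ x in Icc (0:ℝ) 1, ENNReal.ofReal (a * sin (π * m * x)) := by
        rw [ofReal_integral_eq_lintegral_ofReal (hcont.integrableOn_Icc)
          (ae_of_all _ fun _ => le_max_right _ _)]
        simp

lemma ofReal_one_sub_exp_neg_le {a b : ℝ} (hab : a ≤ b) :
    ENNReal.ofReal (1 - exp (-a)) ≤ 1 - ENNReal.ofReal (exp (-b)) := by
  rw [ENNReal.ofReal_sub _ (exp_nonneg _), ENNReal.ofReal_one]
  gcongr

theorem stmt18 (C : ℝ) (hC : 0 < C) (n : ℕ) (hn : 2 ≤ n)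
    (fn : ℝ → ℝ)
    (hfn : ∀ x : ℝ, fn x = C / (π * ((n : ℝ) - 1)) * Real.sin (π * ((n : ℝ) - 1) * x))
    (hband : ∀ x ∈ Icc (0:ℝ) 1, |fn x| ≤ C + 1)
    [SigmaFinite (bandIntensity C n (fun _ => (0:ℝ)))] [SigmaFinite (bandIntensity C n fn)] :
    pppLaw (bandIntensity C n (fun _ => (0:ℝ)))
        {ω : (k : ℕ) × (Fin k → ℝ × ℝ) | ∃ i : Fin ω.1, 0 < (ω.2 i).2} = 0 ∧
    ENNReal.ofReal (1 - Real.exp (-(C / π ^ 2) * ((n : ℝ) / ((n : ℝ) - 1)))) ≤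
      pppLaw (bandIntensity C n fn)
        {ω : (k : ℕ) × (Fin k → ℝ × ℝ) | ∃ i : Fin ω.1, 0 < (ω.2 i).2} ∧
    ENNReal.ofReal (1 - Real.exp (-(C / π ^ 2))) ≤
      pppLaw (bandIntensity C n fn)
        {ω : (k : ℕ) × (Fin k → ℝ × ℝ) | ∃ i : Fin ω.1, 0 < (ω.2 i).2} := by
  set S : Set (ℝ × ℝ) := {z | 0 < z.2}
  have hS : MeasurableSet S := measurableSet_lt measurable_const measurable_snd
  have hA : {ω : (k : ℕ) × (Fin k → ℝ × ℝ) | ∃ i : Fin ω.1, 0 < (ω.2 i).2} =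
      {ω | ∃ i, ω.2 i ∈ S} := rfl
  have hfn_meas : Measurable fn := by rw [funext hfn]; fun_prop
  have hν : bandIntensity C n fn univ ≠ ⊤ :=
    bandIntensity_univ_ne_top hfn_meas fun x hx => (le_abs_self _).trans (hband x hx)
  have hm : ((n - 1 : ℕ) : ℝ) = n - 1 := Nat.cast_pred (by omega)
  have hn1 : (0 : ℝ) < n - 1 := by rw [← hm]; exact_mod_cast Nat.sub_pos_of_lt hn
  have hmass : C / π ^ 2 * (n / (n - 1)) ≤ (bandIntensity C n fn S).toReal := by
    rw [← ENNReal.ofReal_le_iff_le_toReal (measure_ne_top_of_subset (subset_univ S) hν)]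
    calc ENNReal.ofReal (C / π ^ 2 * (n / (n - 1)))
        = n * ENNReal.ofReal (C / (π * (n - 1)) / π) := by
          rw [← ENNReal.ofReal_natCast, ← ENNReal.ofReal_mul (by positivity)]
          congr 1
          field_simp
      _ ≤ n * ∫⁻ x in Icc (0:ℝ) 1, ENNReal.ofReal (fn x) := by
          simp_rw [hfn, ← hm]
          gcongr
          exact ofReal_div_pi_le_lintegral_sin_posPart (by positivity) (by omega)
      _ ≤ bandIntensity C n fn S :=
          lintegral_le_bandIntensity_upperHalfPlane (by linarith) hfn_meas
  rw [hA, pppLaw_exists_mem _ hν hS,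
    pppLaw_exists_mem _ (bandIntensity_univ_ne_top measurable_const fun _ _ => le_rfl) hS,
    bandIntensity_upperHalfPlane_eq_zero measurable_const fun _ _ => le_rfl, neg_mul]
  refine ⟨by simp, ofReal_one_sub_exp_neg_le hmass, ofReal_one_sub_exp_neg_le (le_trans ?_ hmass)⟩
  exact le_mul_of_one_le_right (by positivity) ((one_le_div hn1).2 (by linarith))
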